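/- arXiv:1212.6028 — 6 statements merged into one kernel-verified Lean document; each statement's English description precedes it below -/
import Mathlib

section
/- For real numbers λ₁,...,λₙ with n ≥ 2, let S = Σᵢ λᵢ², f₃ = Σᵢ λᵢ³, f₄ = Σᵢ λᵢ⁴, and suppose S > 0. If λ_max = maxᵢ λᵢ and λ_min = minᵢ λᵢ and (λ_max, λ_min) ≠ (0,0), then f₄ - f₃²/S ≥ (λ_max - λ_min)² · (λ_max λ_min)² / (λ_max² + λ_min²). -/
theorem stmt_0 (n : ℕ) (hn : 2 ≤ n) (l : Fin n → ℝ)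
    (S f3 f4 lmax lmin : ℝ)
    (hS : S = ∑ i, l i ^ 2) (hf3 : f3 = ∑ i, l i ^ 3) (hf4 : f4 = ∑ i, l i ^ 4)
    (hSpos : 0 < S)
    (hmax : ∀ i, l i ≤ lmax) (hmax' : ∃ i, l i = lmax)
    (hmin : ∀ i, lmin ≤ l i) (hmin' : ∃ i, l i = lmin)
    (hne : (lmax, lmin) ≠ (0, 0)) :
    f4 - f3 ^ 2 / S ≥ (lmax - lmin) ^ 2 * (lmax * lmin) ^ 2 / (lmax ^ 2 + lmin ^ 2) := by
  have hS0 : S ≠ 0 := ne_of_gt hSpos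
  set t := f3 / S with ht
  have hsum : ∑ i, (l i ^ 2 - t * l i) ^ 2 = f4 - f3 ^ 2 / S := by
    have expand : ∀ i ∈ Finset.univ, (l i ^ 2 - t * l i) ^ 2
        = l i ^ 4 - 2 * t * (l i ^ 3) + t ^ 2 * (l i ^ 2) := fun i _ => by ring
    rw [Finset.sum_congr rfl expand, Finset.sum_add_distrib, Finset.sum_sub_distrib,
      ← Finset.mul_sum, ← Finset.mul_sum, ← hS, ← hf3, ← hf4, ht]
    field_simp
    ring
  rw [← hsum]
  obtain ⟨i, hi⟩ := hmax'
  obtain ⟨j, hj⟩ := hmin'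
  by_cases hab : lmax = lmin
  · have hRHS : (lmax - lmin) ^ 2 * (lmax * lmin) ^ 2 / (lmax ^ 2 + lmin ^ 2) = 0 := by
      rw [hab]; simp
    rw [hRHS]
    exact Finset.sum_nonneg fun i _ => sq_nonneg _
  · have hij : i ≠ j := by
      intro h; apply hab; rw [← hi, h, hj]
    have hp : 0 < lmax ^ 2 + lmin ^ 2 := by
      have hor : lmax ≠ 0 ∨ lmin ≠ 0 := by
        by_contra h
        push_neg at h
        exact hne (by rw [h.1, h.2])
      rcases hor with h | h
      · have : 0 < lmax ^ 2 := lt_of_le_of_ne (sq_nonneg _) (Ne.symm (pow_ne_zero 2 h))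
        nlinarith [sq_nonneg lmin]
      · have : 0 < lmin ^ 2 := lt_of_le_of_ne (sq_nonneg _) (Ne.symm (pow_ne_zero 2 h))
        nlinarith [sq_nonneg lmax]
    have hsub : (lmax ^ 2 - t * lmax) ^ 2 + (lmin ^ 2 - t * lmin) ^ 2
        ≤ ∑ k, (l k ^ 2 - t * l k) ^ 2 := by
      have h1 : ({i, j} : Finset (Fin n)) ⊆ Finset.univ := Finset.subset_univ _
      have h2 := Finset.sum_le_sum_of_subset_of_nonneg h1
        (fun k _ _ => sq_nonneg (l k ^ 2 - t * l k))
      rwa [Finset.sum_pair hij, hi, hj] at h2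
    refine le_trans ?_ hsub
    rw [div_le_iff₀ hp]
    nlinarith [sq_nonneg ((lmax ^ 2 + lmin ^ 2) * t - (lmax ^ 3 + lmin ^ 3))]
end

section
/- Let λ₁,...,λₙ be real numbers and let h : Fin n → Fin n → Fin n → ℝ be symmetric in all three indices. Let A = Σ_{i,j,k} λᵢ² h(i,j,k)², B = Σ_{i,j,k} λᵢ λⱼ h(i,j,k)², λ_max = maxᵢ λᵢ, λ_min = minᵢ λᵢ. Then A - B ≤ (1/3)(λ_max - λ_min)² · (Σ_{i,j,k} h(i,j,k)² - Σᵢ h(i,i,i)²). -/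
set_option maxHeartbeats 1000000 in
theorem stmt_2 (n : ℕ) (l : Fin n → ℝ) (h : Fin n → Fin n → Fin n → ℝ)
    (hsym1 : ∀ i j k, h i j k = h j i k) (hsym2 : ∀ i j k, h i j k = h i k j)
    (A B lmax lmin : ℝ)
    (hA : A = ∑ i, ∑ j, ∑ k, l i ^ 2 * h i j k ^ 2)
    (hB : B = ∑ i, ∑ j, ∑ k, l i * l j * h i j k ^ 2)
    (hmax : ∀ i, l i ≤ lmax) (hmax' : ∃ i, l i = lmax)
    (hmin : ∀ i, lmin ≤ l i) (hmin' : ∃ i, l i = lmin) :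
    A - B ≤ (1 / 3) * (lmax - lmin) ^ 2 *
      ((∑ i, ∑ j, ∑ k, h i j k ^ 2) - ∑ i, h i i i ^ 2) := by
  have swap12 : ∀ f : Fin n → Fin n → Fin n → ℝ,
      (∑ i, ∑ j, ∑ k, f i j k) = ∑ i, ∑ j, ∑ k, f j i k := fun f => Finset.sum_comm
  have swap23 : ∀ f : Fin n → Fin n → Fin n → ℝ,
      (∑ i, ∑ j, ∑ k, f i j k) = ∑ i, ∑ j, ∑ k, f i k j :=
    fun f => Finset.sum_congr rfl fun i _ => Finset.sum_comm
  have cyc : ∀ f : Fin n → Fin n → Fin n → ℝ,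
      (∑ i, ∑ j, ∑ k, f i j k) = ∑ i, ∑ j, ∑ k, f k i j := fun f => by
    rw [swap12 f]; exact swap23 _
  have hs1 : ∀ i j k, h j i k ^ 2 = h i j k ^ 2 := fun i j k => by rw [hsym1]
  have hs2 : ∀ i j k, h i k j ^ 2 = h i j k ^ 2 := fun i j k => by rw [← hsym2]
  have hs3 : ∀ i j k, h k i j ^ 2 = h i j k ^ 2 := fun i j k => by
    rw [hsym1 k i j, ← hsym2 i j k]
  -- the various reindexed forms of A and B
  have eA2 : (∑ i, ∑ j, ∑ k, l j ^ 2 * h i j k ^ 2) = A := by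
    rw [swap12 (fun i j k => l j ^ 2 * h i j k ^ 2)]
    simp only [hs1]; rw [hA]
  have eA3 : (∑ i, ∑ j, ∑ k, l k ^ 2 * h i j k ^ 2) = A := by
    rw [cyc (fun i j k => l k ^ 2 * h i j k ^ 2)]
    simp only [hs3]; rw [← eA2]
  have eB2 : (∑ i, ∑ j, ∑ k, l j * l k * h i j k ^ 2) = B := by
    rw [cyc (fun i j k => l j * l k * h i j k ^ 2)]
    simp only [hs3]; rw [hB]
  have eB3 : (∑ i, ∑ j, ∑ k, l i * l k * h i j k ^ 2) = B := by
    rw [swap23 (fun i j k => l i * l k * h i j k ^ 2)]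
    simp only [hs2]; rw [hB]
  have key : 6 * (A - B) = ∑ i, ∑ j, ∑ k,
      ((l i - l j) ^ 2 + (l j - l k) ^ 2 + (l i - l k) ^ 2) * h i j k ^ 2 := by
    have expand : ∀ i j k : Fin n,
        ((l i - l j) ^ 2 + (l j - l k) ^ 2 + (l i - l k) ^ 2) * h i j k ^ 2 =
        2 * (l i ^ 2 * h i j k ^ 2) + 2 * (l j ^ 2 * h i j k ^ 2)
          + 2 * (l k ^ 2 * h i j k ^ 2) - 2 * (l i * l j * h i j k ^ 2)
          - 2 * (l j * l k * h i j k ^ 2) - 2 * (l i * l k * h i j k ^ 2) := by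
      intros; ring
    simp only [expand, two_mul, Finset.sum_sub_distrib, Finset.sum_add_distrib]
    rw [eA2, eA3, eB2, eB3, ← hA, ← hB]
    ring
  have hbound : (∑ i, ∑ j, ∑ k,
        ((l i - l j) ^ 2 + (l j - l k) ^ 2 + (l i - l k) ^ 2) * h i j k ^ 2)
      ≤ ∑ i, ∑ j, ∑ k, 2 * (lmax - lmin) ^ 2 *
          (h i j k ^ 2 - if j = i ∧ k = i then h i j k ^ 2 else 0) := by
    apply Finset.sum_le_sum; intro i _
    apply Finset.sum_le_sum; intro j _
    apply Finset.sum_le_sum; intro k _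
    by_cases hc : j = i ∧ k = i
    · obtain ⟨rfl, rfl⟩ := hc
      simp
    · rw [if_neg hc, sub_zero]
      have key3 : (l i - l j) ^ 2 + (l j - l k) ^ 2 + (l i - l k) ^ 2
          ≤ 2 * (lmax - lmin) ^ 2 := by
        rcases le_total (l i) (l j) with hab | hab <;>
          rcases le_total (l j) (l k) with hbc | hbc <;>
          rcases le_total (l i) (l k) with hac | hac <;>
          nlinarith [hmax i, hmax j, hmax k, hmin i, hmin j, hmin k]
      exact mul_le_mul_of_nonneg_right key3 (sq_nonneg _)
  have hdiag : (∑ i, ∑ j, ∑ k, (if j = i ∧ k = i then h i j k ^ 2 else 0 : ℝ))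
      = ∑ i, h i i i ^ 2 := by
    apply Finset.sum_congr rfl; intro i _
    simp [ite_and, Finset.sum_ite_eq']
  have hsplit : (∑ i, ∑ j, ∑ k, 2 * (lmax - lmin) ^ 2 *
        (h i j k ^ 2 - if j = i ∧ k = i then h i j k ^ 2 else 0))
      = 2 * (lmax - lmin) ^ 2 *
        ((∑ i, ∑ j, ∑ k, h i j k ^ 2) - ∑ i, h i i i ^ 2) := by
    rw [← hdiag]
    simp only [← Finset.mul_sum, Finset.sum_sub_distrib]
  rw [hsplit] at hbound
  nlinarith [hbound, key]
end

section
/- Let λ₁,...,λₙ be real numbers with S = Σᵢ λᵢ² > 0 and let h be a fully symmetric 3-tensor with Σᵢ λᵢ h(i,i,k) = 0 for every k. Then Σₖ (Σᵢ λᵢ² h(i,i,k))² ≤ (f₄ - f₃²/S) · Σ_{i,k} h(i,i,k)², where f₃ = Σᵢ λᵢ³ and f₄ = Σᵢ λᵢ⁴. -/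
theorem stmt_5 (n : ℕ) (l : Fin n → ℝ) (h : Fin n → Fin n → Fin n → ℝ)
    (hsym1 : ∀ i j k, h i j k = h j i k) (hsym2 : ∀ i j k, h i j k = h i k j)
    (S f3 f4 : ℝ)
    (hS : S = ∑ i, l i ^ 2) (hSpos : 0 < S)
    (hf3 : f3 = ∑ i, l i ^ 3) (hf4 : f4 = ∑ i, l i ^ 4)
    (hconstr : ∀ k, ∑ i, l i * h i i k = 0) :
    ∑ k, (∑ i, l i ^ 2 * h i i k) ^ 2 ≤
      (f4 - f3 ^ 2 / S) * ∑ i, ∑ k, h i i k ^ 2 := by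
  set a : ℝ := f3 / S with ha
  have hSne : S ≠ 0 := ne_of_gt hSpos
  have hcoef : ∑ i, (l i ^ 2 - a * l i) ^ 2 = f4 - f3 ^ 2 / S := by
    have expand : ∀ i, (l i ^ 2 - a * l i) ^ 2
        = l i ^ 4 - 2 * a * l i ^ 3 + a ^ 2 * l i ^ 2 := by intro i; ring
    simp only [expand, Finset.sum_add_distrib, Finset.sum_sub_distrib,
      ← Finset.mul_sum]
    rw [← hf4, ← hf3, ← hS, ha]
    field_simp
    ring
  have key : ∀ k, (∑ i, l i ^ 2 * h i i k) ^ 2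
      ≤ (f4 - f3 ^ 2 / S) * ∑ i, h i i k ^ 2 := by
    intro k
    have hrw : ∑ i, l i ^ 2 * h i i k
        = ∑ i, (l i ^ 2 - a * l i) * h i i k := by
      have : ∑ i, (l i ^ 2 - a * l i) * h i i k
          = (∑ i, l i ^ 2 * h i i k) - a * ∑ i, l i * h i i k := by
        rw [Finset.mul_sum, ← Finset.sum_sub_distrib]
        congr 1; ext i; ring
      rw [this, hconstr k]; ring
    rw [hrw, ← hcoef]
    exact Finset.sum_mul_sq_le_sq_mul_sq Finset.univ _ _
  calc ∑ k, (∑ i, l i ^ 2 * h i i k) ^ 2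
      ≤ ∑ k, (f4 - f3 ^ 2 / S) * ∑ i, h i i k ^ 2 :=
        Finset.sum_le_sum fun k _ => key k
    _ = (f4 - f3 ^ 2 / S) * ∑ i, ∑ k, h i i k ^ 2 := by
        rw [← Finset.mul_sum, Finset.sum_comm]
end

section
/- Let λ₁,...,λₙ be real with S = Σᵢ λᵢ² > 0, let h be a fully symmetric 3-tensor with Σᵢ λᵢ h(i,i,k) = 0 for all k, set T = Σ_{i,j,k} h(i,j,k)², α = Σᵢ h(i,i,i)² / T (assuming T > 0), f = f₄ - f₃²/S. Then Σₖ (Σᵢ λᵢ² h(i,i,k))² ≤ ((1+2α)/3) · T · f. -/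
theorem stmt_7 (n : ℕ) (l : Fin n → ℝ) (h : Fin n → Fin n → Fin n → ℝ)
    (hsym1 : ∀ i j k, h i j k = h j i k) (hsym2 : ∀ i j k, h i j k = h i k j)
    (S f3 f4 T α f : ℝ)
    (hS : S = ∑ i, l i ^ 2) (hSpos : 0 < S)
    (hf3 : f3 = ∑ i, l i ^ 3) (hf4 : f4 = ∑ i, l i ^ 4)
    (hconstr : ∀ k, ∑ i, l i * h i i k = 0)
    (hT : T = ∑ i, ∑ j, ∑ k, h i j k ^ 2) (hTpos : 0 < T)
    (hα : α = (∑ i, h i i i ^ 2) / T)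
    (hf : f = f4 - f3 ^ 2 / S) :
    ∑ k, (∑ i, l i ^ 2 * h i i k) ^ 2 ≤ ((1 + 2 * α) / 3) * T * f := by
  set c : ℝ := f3 / S with hc
  set D : ℝ := ∑ i, ∑ k, h i i k ^ 2 with hD
  set E : ℝ := ∑ i, h i i i ^ 2 with hE
  -- f ≥ 0 by Cauchy-Schwarz
  have hcs : f3 ^ 2 ≤ S * f4 := by
    have := Finset.sum_mul_sq_le_sq_mul_sq Finset.univ (fun i => l i) (fun i => l i ^ 2)
    calc f3 ^ 2 = (∑ i, l i * l i ^ 2) ^ 2 := by rw [hf3]; congr 1; apply Finset.sum_congr rfl; intro i _; ring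
      _ ≤ (∑ i, l i ^ 2) * ∑ i, (l i ^ 2) ^ 2 := this
      _ = S * f4 := by rw [hS, hf4]; congr 1; apply Finset.sum_congr rfl; intro i _; ring
  have hfnonneg : 0 ≤ f := by
    rw [hf]
    rw [sub_nonneg, div_le_iff₀ hSpos]
    linarith [hcs]
  -- the weight sum equals f
  have hwsum : (∑ i, (l i ^ 2 - c * l i) ^ 2) = f := by
    have : (∑ i, (l i ^ 2 - c * l i) ^ 2)
        = f4 - 2 * c * f3 + c ^ 2 * S := by
      rw [hf4, hf3, hS, Finset.mul_sum, Finset.mul_sum, ← Finset.sum_sub_distrib,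
        ← Finset.sum_add_distrib]
      apply Finset.sum_congr rfl; intro i _; ring
    rw [this, hf, hc]
    field_simp
    ring
  -- per-k Cauchy-Schwarz
  have hB : ∀ k, (∑ i, l i ^ 2 * h i i k) ^ 2 ≤ f * ∑ i, h i i k ^ 2 := by
    intro k
    have hrow : (∑ i, l i ^ 2 * h i i k) = ∑ i, (l i ^ 2 - c * l i) * h i i k := by
      have : (∑ i, (l i ^ 2 - c * l i) * h i i k)
          = (∑ i, l i ^ 2 * h i i k) - c * ∑ i, l i * h i i k := by
        rw [Finset.mul_sum, ← Finset.sum_sub_distrib]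
        apply Finset.sum_congr rfl; intro i _; ring
      rw [this, hconstr k]; ring
    rw [hrow]
    calc (∑ i, (l i ^ 2 - c * l i) * h i i k) ^ 2
        ≤ (∑ i, (l i ^ 2 - c * l i) ^ 2) * ∑ i, (h i i k) ^ 2 :=
          Finset.sum_mul_sq_le_sq_mul_sq Finset.univ _ _
      _ = f * ∑ i, h i i k ^ 2 := by rw [hwsum]
  -- combinatorial bound: 3 D ≤ T + 2 E
  have hkey : 3 * D ≤ T + 2 * E := by
    have htriple : (∑ i, ∑ j, ∑ k,
        ((if i = j then h i j k ^ 2 else 0) + (if j = k then h i j k ^ 2 else 0)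
          + (if i = k then h i j k ^ 2 else 0)
          - (if i = j ∧ j = k then 2 * h i j k ^ 2 else 0)))
        = 3 * D - 2 * E := by
      have e1 : (∑ i, ∑ j, ∑ k, (if i = j then h i j k ^ 2 else 0)) = D := by
        rw [hD]
        apply Finset.sum_congr rfl; intro i _
        rw [show (∑ j, ∑ k, (if i = j then h i j k ^ 2 else 0))
            = ∑ j, (if i = j then ∑ k, h i j k ^ 2 else 0) from by
          apply Finset.sum_congr rfl; intro j _; split_ifs <;> simp]
        simp
      have e2 : (∑ i, ∑ j, ∑ k, (if j = k then h i j k ^ 2 else 0)) = D := by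
        rw [hD]
        rw [Finset.sum_comm]
        apply Finset.sum_congr rfl; intro j _
        rw [show (∑ i, ∑ k, (if j = k then h i j k ^ 2 else 0))
            = ∑ i, (if True then h i j j ^ 2 else 0) from by
          apply Finset.sum_congr rfl; intro i _; simp]
        simp only [if_true]
        have : ∀ i, h i j j = h j j i := by
          intro i; rw [hsym1, hsym2]
        rw [Finset.sum_congr rfl (fun i _ => by rw [this i])]
      have e3 : (∑ i, ∑ j, ∑ k, (if i = k then h i j k ^ 2 else 0)) = D := by
        rw [hD]
        apply Finset.sum_congr rfl; intro i _
        rw [show (∑ j, ∑ k, (if i = k then h i j k ^ 2 else 0)) = ∑ j, h i j i ^ 2 from by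
          apply Finset.sum_congr rfl; intro j _; simp]
        apply Finset.sum_congr rfl; intro j _
        rw [show h i j i = h i i j from by rw [hsym2]]
      have e4 : (∑ i, ∑ j, ∑ k, (if i = j ∧ j = k then 2 * h i j k ^ 2 else 0))
          = 2 * E := by
        rw [hE, Finset.mul_sum]
        apply Finset.sum_congr rfl; intro i _
        rw [show (∑ j, ∑ k, (if i = j ∧ j = k then 2 * h i j k ^ 2 else 0))
            = ∑ j, (if i = j then 2 * h i j j ^ 2 else 0) from by
          apply Finset.sum_congr rfl; intro j _
          by_cases hij : i = j <;> simp [hij]]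
        simp
      calc (∑ i, ∑ j, ∑ k,
          ((if i = j then h i j k ^ 2 else 0) + (if j = k then h i j k ^ 2 else 0)
            + (if i = k then h i j k ^ 2 else 0)
            - (if i = j ∧ j = k then 2 * h i j k ^ 2 else 0)))
          = (∑ i, ∑ j, ∑ k, (if i = j then h i j k ^ 2 else 0))
            + (∑ i, ∑ j, ∑ k, (if j = k then h i j k ^ 2 else 0))
            + (∑ i, ∑ j, ∑ k, (if i = k then h i j k ^ 2 else 0))
            - (∑ i, ∑ j, ∑ k, (if i = j ∧ j = k then 2 * h i j k ^ 2 else 0)) := by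
            simp only [← Finset.sum_add_distrib, ← Finset.sum_sub_distrib]
        _ = 3 * D - 2 * E := by rw [e1, e2, e3, e4]; ring
    have hle : (∑ i, ∑ j, ∑ k,
        ((if i = j then h i j k ^ 2 else 0) + (if j = k then h i j k ^ 2 else 0)
          + (if i = k then h i j k ^ 2 else 0)
          - (if i = j ∧ j = k then 2 * h i j k ^ 2 else 0))) ≤ T := by
      rw [hT]
      apply Finset.sum_le_sum; intro i _
      apply Finset.sum_le_sum; intro j _
      apply Finset.sum_le_sum; intro k _
      have hsq := sq_nonneg (h i j k)
      by_cases hij : i = j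
      · subst hij
        by_cases hik : i = k
        · subst hik; simp; linarith
        · simp [hik]
      · by_cases hjk : j = k
        · subst hjk; simp [hij]
        · by_cases hik : i = k
          · subst hik; simp [hij, hjk]
          · simp [hij, hjk, hik]; positivity
    rw [htriple] at hle
    linarith
  -- α * T = E
  have hαT : α * T = E := by
    rw [hα]; field_simp
  -- assemble
  have hDnonneg : 0 ≤ D := by
    rw [hD]
    apply Finset.sum_nonneg; intro i _
    apply Finset.sum_nonneg; intro k _
    exact sq_nonneg _
  calc ∑ k, (∑ i, l i ^ 2 * h i i k) ^ 2
      ≤ ∑ k, f * ∑ i, h i i k ^ 2 := Finset.sum_le_sum (fun k _ => hB k)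
    _ = f * D := by
        have h' : ∑ k, f * ∑ i, h i i k ^ 2 = f * ∑ k, ∑ i, h i i k ^ 2 := by
          rw [Finset.mul_sum]
        rw [h', hD, Finset.sum_comm]
    _ ≤ f * ((T + 2 * E) / 3) := by
        apply mul_le_mul_of_nonneg_left _ hfnonneg
        linarith
    _ = ((1 + 2 * α) / 3) * T * f := by
        have : (1 + 2 * α) / 3 * T = (T + 2 * (α * T)) / 3 := by ring
        rw [this, hαT]; ring
end

section
/- Suppose S > 1 and t are reals with S - 1 = tS and t ≤ 1/6, and suppose real numbers u = λ₁λ₂ ≤ 0 and positive constant γ₁ < 0.42 satisfy (S-1)(S-2) + γ₁ S t S ≥ 2γ₁ u t S + (3/2)(1 - 130/(27·6)) u². Then S ≥ (16 + 27γ₁²)/(8 + 8γ₁ + 27γ₁²) > 1.286. -/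
theorem stmt_13 (S t u γ : ℝ) (hS : 1 < S) (ht : S - 1 = t * S) (ht6 : t ≤ 1 / 6)
    (hu : u ≤ 0) (hγ0 : 0 < γ) (hγ : γ < 0.42)
    (hineq : (S - 1) * (S - 2) + γ * S * (t * S) ≥
      2 * γ * u * t * S + (3 / 2) * (1 - 130 / (27 * 6)) * u ^ 2) :
    S ≥ (16 + 27 * γ ^ 2) / (8 + 8 * γ + 27 * γ ^ 2) ∧
    (16 + 27 * γ ^ 2) / (8 + 8 * γ + 27 * γ ^ 2) > 1.286 := by
  have e1 : γ * S * (t * S) = γ * S * (S - 1) := by rw [← ht]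
  have e2 : 2 * γ * u * t * S = 2 * γ * u * (S - 1) := by
    rw [show 2 * γ * u * t * S = 2 * γ * u * (t * S) from by ring, ← ht]
  rw [e1, e2] at hineq
  have hkey : (S - 1) * (S - 2) + γ * S * (S - 1) + (27/8) * γ^2 * (S-1)^2 ≥ 0 := by
    nlinarith [hineq, sq_nonneg (u + (27/8) * γ * (S-1))]
  have hden : 0 < 8 + 8 * γ + 27 * γ ^ 2 := by nlinarith [sq_nonneg γ]
  constructor
  · rw [ge_iff_le, div_le_iff₀ hden]
    nlinarith [hkey, sq_nonneg (S - 1), hS]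
  · rw [gt_iff_lt, lt_div_iff₀ hden]
    nlinarith [mul_pos hγ0 (sub_pos.mpr hγ)]
end

section
/- The function g₁(t) = 4√((2/3)(54/(5t) - 1)) - 2/t - 69/5 is strictly decreasing on the interval (0.14, 1), and g₁(t) < 0 for all t ∈ (0.1978, 3/10]. -/
/-!
In the variable `u = 1/t` one has `g1 t = 4 √(36u/5 - 2/3) - 2u - 69/5`. The square-root term
has slope `(72/5) / √(36u/5 - 2/3)`, which exceeds `2` as long as the root is below `36/5`; this
covers `u < 50/7`, i.e. `t > 0.14`, so `g1` increases in `u` and decreases in `t` there.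
Negativity amounts, after squaring, to `4u² - 60u + 15083/75 > 0`, whose smaller root is
`≈ 5.0563 > 1/0.1978`.
-/

noncomputable def g1 (t : ℝ) : ℝ :=
  4 * Real.sqrt ((2 / 3) * (54 / (5 * t) - 1)) - 2 / t - 69 / 5

open Real

lemma div_two_mul_lt_sqrt_sub_sqrt {x y c : ℝ} (hx : 0 ≤ x) (hxy : x < y) (hyc : √y < c) :
    (y - x) / (2 * c) < √y - √x := by
  have hsqrt : √x < √y := sqrt_lt_sqrt hx hxy
  have hc : 0 < c := (sqrt_nonneg y).trans_lt hyc
  have hdiff : y - x = (√y - √x) * (√y + √x) := by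
    linear_combination sq_sqrt hx - sq_sqrt (hx.trans hxy.le)
  rw [div_lt_iff₀ (by positivity), hdiff]
  apply mul_lt_mul_of_pos_left _ (sub_pos.2 hsqrt)
  linarith

lemma g1_eq (t : ℝ) : g1 t = 4 * √(36 / 5 * t⁻¹ - 2 / 3) - 2 * t⁻¹ - 69 / 5 := by
  simp only [g1, div_eq_mul_inv, mul_inv]
  ring_nf

lemma strictAntiOn_g1 : StrictAntiOn g1 (Set.Ioo 0.14 1) := by
  rintro a ⟨ha, -⟩ b ⟨-, hb⟩ hab
  norm_num at ha
  have hinv : b⁻¹ < a⁻¹ := inv_strictAntiOn (by simp; linarith) (by simp; linarith) hab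
  have hb_inv : 1 < b⁻¹ := one_lt_inv₀ (by linarith) |>.2 hb
  have ha_inv : a⁻¹ < 50 / 7 := by
    rw [inv_lt_comm₀ (by linarith) (by norm_num)]; norm_num; exact ha
  have hslope := div_two_mul_lt_sqrt_sub_sqrt (c := 36 / 5)
    (x := 36 / 5 * b⁻¹ - 2 / 3) (y := 36 / 5 * a⁻¹ - 2 / 3) (by linarith) (by linarith)
    (by rw [sqrt_lt' (by norm_num)]; linarith)
  rw [g1_eq, g1_eq]
  norm_num at hslope
  linarith

lemma g1_neg_of_lt {t : ℝ} (ht : 0.1978 < t) : g1 t < 0 := by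
  norm_num at ht
  have hu : t⁻¹ < 5000 / 989 := by
    rw [inv_lt_comm₀ (by linarith) (by norm_num)]; norm_num; exact ht
  have hu0 : 0 < t⁻¹ := inv_pos.2 (by linarith)
  have hsqrt : √(36 / 5 * t⁻¹ - 2 / 3) < (2 * t⁻¹ + 69 / 5) / 4 := by
    rw [sqrt_lt' (by positivity)]
    nlinarith [mul_pos (sub_pos.2 hu) (show (0 : ℝ) < 9 - t⁻¹ by linarith)]
  rw [g1_eq]
  linarith

theorem stmt_16 :
    StrictAntiOn g1 (Set.Ioo 0.14 1) ∧
    ∀ t : ℝ, 0.1978 < t → t ≤ 3 / 10 → g1 t < 0 :=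
  ⟨strictAntiOn_g1, fun _ ht _ => g1_neg_of_lt ht⟩
end
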